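/- arXiv:1707.09918 — 2 statements merged into one kernel-verified Lean document; each statement's English description precedes it below -/
import Mathlib

section
/- The bounce-free generating functions satisfy f_ee(x)·((1+g_en(x))² − g_ee(x)·g_nn(x)) = g_ee(x), f_nn(x)·((1+g_en(x))² − g_ee(x)·g_nn(x)) = g_nn(x), and (1 − f_en(x))·((1+g_en(x))² − g_ee(x)·g_nn(x)) = 1 + g_en(x). -/
/-!
Lattice paths with unit East (`true`) and unit North (`false`) steps,
bounces with respect to the line `y = (β/α)·x`, and the associated
generating functions over `ℚ`.
-/

/-- A lattice path is a list of unit steps: `true` = East, `false` = North. -/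
abbrev LatticePath := List Bool

/-- `p` is a lattice path from `(0,0)` to `(α*k, β*k)`, i.e. a member of `L_{β/α}(k)`. -/
def InL (α β k : ℕ) (p : LatticePath) : Prop :=
  p.count true = α * k ∧ p.count false = β * k

/-- `p` has a left bounce at step index `i`: step `i` is an E-step, step `i+1` is an
N-step, and their common endpoint (the point reached after `i+1` steps) lies on the
line `y = (β/α)·x`, i.e. `α·y = β·x`. -/
def IsLeftBounce (α β : ℕ) (p : LatticePath) (i : ℕ) : Prop :=
  p[i]? = some true ∧ p[i + 1]? = some false ∧
    α * ((p.take (i + 1)).count false) = β * ((p.take (i + 1)).count true)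

/-- `p` has a right bounce at step index `i`: step `i` is an N-step, step `i+1` is an
E-step, and their common endpoint lies on the line `y = (β/α)·x`. -/
def IsRightBounce (α β : ℕ) (p : LatticePath) (i : ℕ) : Prop :=
  p[i]? = some false ∧ p[i + 1]? = some true ∧
    α * ((p.take (i + 1)).count false) = β * ((p.take (i + 1)).count true)

/-- The number of left bounces of `p` with respect to the line `y = (β/α)·x`. -/
noncomputable def leftBounces (α β : ℕ) (p : LatticePath) : ℕ :=
  {i | IsLeftBounce α β p i}.ncard

/-- The number of right bounces of `p` with respect to the line `y = (β/α)·x`. -/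
noncomputable def rightBounces (α β : ℕ) (p : LatticePath) : ℕ :=
  {i | IsRightBounce α β p i}.ncard

/-- `p` is bounce-free: it has no left and no right bounces. -/
def BounceFree (α β : ℕ) (p : LatticePath) : Prop :=
  (∀ i, ¬ IsLeftBounce α β p i) ∧ (∀ i, ¬ IsRightBounce α β p i)

/-- The first step of `p` is `a`. -/
def FirstStep (p : LatticePath) (a : Bool) : Prop := p.head? = some a

/-- The last step of `p` is `b`. -/
def LastStep (p : LatticePath) (b : Bool) : Prop := p.getLast? = some b

/-- The generating function `Σ_{k≥1} |S k|·xᵏ ∈ ℚ[[x]]` of a family of path sets. -/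
noncomputable def gfOf (S : ℕ → Set LatticePath) : PowerSeries ℚ :=
  PowerSeries.mk fun k => if k = 0 then 0 else ((S k).ncard : ℚ)

/-- `g(x) = Σ_{k≥1} C((α+β)k, αk)·xᵏ`, counting all paths in `L_{β/α}(k)`. -/
noncomputable def gSer (α β : ℕ) : PowerSeries ℚ :=
  PowerSeries.mk fun k => if k = 0 then 0 else ((((α + β) * k).choose (α * k) : ℕ) : ℚ)

/-- `g_ee(x) = Σ_{k≥1} C((α+β)k−2, αk−2)·xᵏ`, counting EE-paths in `L_{β/α}(k)`.
We write the lower index as `βk = ((α+β)k−2) − (αk−2)`, which equals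
`C((α+β)k−2, αk−2)` by the symmetry of binomial coefficients and correctly
implements the convention `C(n, −1) = 0` (needed when `αk = 1`), which ℕ-truncated
subtraction would not. -/
noncomputable def geeSer (α β : ℕ) : PowerSeries ℚ :=
  PowerSeries.mk fun k => if k = 0 then 0 else ((((α + β) * k - 2).choose (β * k) : ℕ) : ℚ)

/-- `g_en(x) = Σ_{k≥1} C((α+β)k−2, αk−1)·xᵏ`, counting EN-paths in `L_{β/α}(k)`. -/
noncomputable def genSer (α β : ℕ) : PowerSeries ℚ :=
  PowerSeries.mk fun k => if k = 0 then 0 else ((((α + β) * k - 2).choose (α * k - 1) : ℕ) : ℚ)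

/-- `g_nn(x) = Σ_{k≥1} C((α+β)k−2, αk)·xᵏ`, counting NN-paths in `L_{β/α}(k)`. -/
noncomputable def gnnSer (α β : ℕ) : PowerSeries ℚ :=
  PowerSeries.mk fun k => if k = 0 then 0 else ((((α + β) * k - 2).choose (α * k) : ℕ) : ℚ)

/-- `f_ee(x)`: generating function of bounce-free EE-paths in `L_{β/α}(k)`. -/
noncomputable def feeSer (α β : ℕ) : PowerSeries ℚ :=
  gfOf fun k => {p | InL α β k p ∧ BounceFree α β p ∧ FirstStep p true ∧ LastStep p true}

/-- `f_en(x)`: generating function of bounce-free EN-paths in `L_{β/α}(k)`. -/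
noncomputable def fenSer (α β : ℕ) : PowerSeries ℚ :=
  gfOf fun k => {p | InL α β k p ∧ BounceFree α β p ∧ FirstStep p true ∧ LastStep p false}

/-- `f_nn(x)`: generating function of bounce-free NN-paths in `L_{β/α}(k)`. -/
noncomputable def fnnSer (α β : ℕ) : PowerSeries ℚ :=
  gfOf fun k => {p | InL α β k p ∧ BounceFree α β p ∧ FirstStep p false ∧ LastStep p false}

/-- `f(x)`: generating function of all bounce-free paths in `L_{β/α}(k)`. -/
noncomputable def fSer (α β : ℕ) : PowerSeries ℚ :=
  gfOf fun k => {p | InL α β k p ∧ BounceFree α β p}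

/-- `B_{ℓ,r}(x)`: generating function of paths in `L_{β/α}(k)` with exactly `ℓ`
left bounces and exactly `r` right bounces. -/
noncomputable def BSer (α β ℓ r : ℕ) : PowerSeries ℚ :=
  gfOf fun k => {p | InL α β k p ∧ leftBounces α β p = ℓ ∧ rightBounces α β p = r}

/-- The Fuss–Catalan generating function `c_α(x) = Σ_{k≥0} 1/(αk+1)·C((α+1)k, k)·xᵏ`. -/
noncomputable def fussCatalan (α : ℕ) : PowerSeries ℚ :=
  PowerSeries.mk fun k => (1 / ((α * k + 1 : ℕ) : ℚ)) * ((((α + 1) * k).choose k : ℕ) : ℚ)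

/-- For slope `1/α`: `p` has a horizontal cross at the lattice point `(α*i, i)` (`i ≥ 1`):
`p` passes through `(α*i, i)` (so the prefix of length `(α+1)*i` has exactly `α*i`
E-steps), and both the step ending there and the step starting there are E-steps. -/
def HasHCrossAt (α : ℕ) (p : LatticePath) (i : ℕ) : Prop :=
  1 ≤ i ∧ (p.take ((α + 1) * i)).count true = α * i ∧
    p[(α + 1) * i - 1]? = some true ∧ p[(α + 1) * i]? = some true

/-- `p` has no horizontal crosses with respect to the line `y = x/α`. -/
def NoHCross (α : ℕ) (p : LatticePath) : Prop := ∀ i, ¬ HasHCrossAt α p i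

/-!
Cutting a path of `L_{β/α}(n)` just after its first bounce writes it uniquely as a bounce-free
path from the origin to a point `(α j, β j)` with `0 < j < n`, ending with a step `c`, followed by
an arbitrary path starting with the step `!c`. Hence `g_ab = f_ab + f_aE·g_Nb + f_aN·g_Eb` for all
`a, b`; as `g_NE = g_EN`, the EE/EN and the NN/NE instances are two linear systems whose
determinant is `(1 + g_en)² − g_ee·g_nn`, and solving them gives the three identities.
-/

lemma ncard_setOf_length_count (c : Bool) (n m : ℕ) :
    {q : List Bool | q.length = n ∧ q.count c = m}.ncard = n.choose m := by
  induction n generalizing m with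
  | zero =>
    rcases m with _ | m
    · rw [Nat.choose_zero_right, Set.ncard_eq_one]
      exact ⟨[], by ext; simp +contextual [List.length_eq_zero_iff]⟩
    · rw [Nat.choose_zero_succ, ← Set.ncard_empty (List Bool)]
      congr 1; ext; simp +contextual [List.length_eq_zero_iff]
  | succ n ih =>
    have hfin (x : Bool) (k : ℕ) :
        (List.cons x '' {q : List Bool | q.length = n ∧ q.count c = k}).Finite :=
      ((List.finite_length_eq Bool n).subset fun q hq => hq.1).image _
    have hcons (x : Bool) : Function.Injective (List.cons x) := List.cons_injective
    rcases m with _ | m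
    · have : {q : List Bool | q.length = n + 1 ∧ q.count c = 0} =
          List.cons (!c) '' {q | q.length = n ∧ q.count c = 0} := by
        ext q; rcases q with _ | ⟨_ | _, t⟩ <;> cases c <;> simp
      rw [this, Set.ncard_image_of_injective _ (hcons _), ih, Nat.choose_zero_right,
        Nat.choose_zero_right]
    · have : {q : List Bool | q.length = n + 1 ∧ q.count c = m + 1} =
          List.cons c '' {q | q.length = n ∧ q.count c = m} ∪
            List.cons (!c) '' {q | q.length = n ∧ q.count c = m + 1} := by
        ext q; rcases q with _ | ⟨_ | _, t⟩ <;> cases c <;> simp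
      have hdisj : Disjoint (List.cons c '' {q : List Bool | q.length = n ∧ q.count c = m})
          (List.cons (!c) '' {q | q.length = n ∧ q.count c = m + 1}) :=
        Set.disjoint_left.mpr fun q ⟨_, _, h⟩ ⟨_, _, h'⟩ => by
          cases c <;> simp [← h] at h'
      rw [this, Set.ncard_union_eq hdisj (hfin _ _) (hfin _ _),
        Set.ncard_image_of_injective _ (hcons _), Set.ncard_image_of_injective _ (hcons _),
        ih, ih, Nat.choose_succ_succ']

lemma List.exists_eq_cons_append_singleton {X : Type*} {p : List X} {a b : X}
    (hp : 2 ≤ p.length) (ha : p.head? = some a) (hb : p.getLast? = some b) :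
    ∃ q, p = a :: (q ++ [b]) := by
  obtain ⟨_ | ⟨x, t⟩, rfl⟩ := List.head?_eq_some_iff.mp ha
  · simp at hp
  · rw [List.getLast?_cons_cons] at hb
    obtain ⟨q, hq⟩ := List.getLast?_eq_some_iff.mp hb
    exact ⟨q, by rw [hq]⟩

lemma InL.length_eq {α β k : ℕ} {p : LatticePath} (h : InL α β k p) :
    p.length = (α + β) * k := by
  rw [← List.count_true_add_count_false p, h.1, h.2, add_mul]

section EndSteps

variable {α β : ℕ}

def pathsFromTo (α β : ℕ) (a b : Bool) (k : ℕ) : Set LatticePath :=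
  {p | InL α β k p ∧ FirstStep p a ∧ LastStep p b}

lemma pathsFromTo_finite (a b : Bool) (k : ℕ) : (pathsFromTo α β a b k).Finite :=
  (List.finite_length_eq Bool ((α + β) * k)).subset fun _ hp => hp.1.length_eq

lemma ncard_pathsFromTo {a b c : Bool} {k : ℕ} (m : ℕ) (hk : 2 ≤ (α + β) * k)
    (h : ∀ q : List Bool, q.length + 2 = (α + β) * k →
      (InL α β k (a :: (q ++ [b])) ↔ q.count c = m)) :
    (pathsFromTo α β a b k).ncard = ((α + β) * k - 2).choose m := by
  have : pathsFromTo α β a b k = (fun q => a :: (q ++ [b])) ''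
      {q | q.length = (α + β) * k - 2 ∧ q.count c = m} := by
    ext p
    constructor
    · rintro ⟨hp, ha, hb⟩
      have hlen := hp.length_eq
      obtain ⟨q, rfl⟩ := List.exists_eq_cons_append_singleton (hlen ▸ hk) ha hb
      simp only [List.length_cons, List.length_append, List.length_nil] at hlen
      exact ⟨q, ⟨by omega, (h q (by omega)).mp hp⟩, rfl⟩
    · rintro ⟨q, ⟨hlen, hc⟩, rfl⟩
      dsimp only
      exact ⟨(h q (by omega)).mpr hc, rfl, by
        rw [LastStep, ← List.cons_append, List.getLast?_concat]⟩
  rw [this, Set.ncard_image_of_injective _ fun _ _ e => by simpa using e,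
    ncard_setOf_length_count]

lemma gfOf_eq_mk {S : ℕ → Set LatticePath} {f : ℕ → ℕ}
    (h : ∀ k, k ≠ 0 → (S k).ncard = f k) :
    gfOf S = PowerSeries.mk fun k => if k = 0 then 0 else (f k : ℚ) := by
  ext k
  simp only [gfOf, PowerSeries.coeff_mk]
  split_ifs with hk
  · rfl
  · rw [h k hk]

lemma two_le_add_mul (hα : 0 < α) (hβ : 0 < β) {k : ℕ} (hk : k ≠ 0) : 2 ≤ (α + β) * k :=
  le_mul_of_le_of_one_le (by omega) (Nat.one_le_iff_ne_zero.mpr hk)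

lemma gfOf_pathsFromTo_true_true (hα : 0 < α) (hβ : 0 < β) :
    gfOf (pathsFromTo α β true true) = geeSer α β :=
  gfOf_eq_mk fun k hk => ncard_pathsFromTo (c := false) _ (two_le_add_mul hα hβ hk)
    fun q hq => by
      have := List.count_true_add_count_false q
      simp [InL, add_mul] at hq ⊢; omega

lemma gfOf_pathsFromTo_true_false (hα : 0 < α) (hβ : 0 < β) :
    gfOf (pathsFromTo α β true false) = genSer α β :=
  gfOf_eq_mk fun k hk => ncard_pathsFromTo (c := true) _ (two_le_add_mul hα hβ hk)
    fun q hq => by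
      have := List.count_true_add_count_false q
      have := Nat.mul_pos hα (Nat.pos_of_ne_zero hk)
      simp [InL, add_mul] at hq ⊢; omega

lemma gfOf_pathsFromTo_false_true (hα : 0 < α) (hβ : 0 < β) :
    gfOf (pathsFromTo α β false true) = genSer α β :=
  gfOf_eq_mk fun k hk => ncard_pathsFromTo (c := true) _ (two_le_add_mul hα hβ hk)
    fun q hq => by
      have := List.count_true_add_count_false q
      have := Nat.mul_pos hα (Nat.pos_of_ne_zero hk)
      simp [InL, add_mul] at hq ⊢; omega

lemma gfOf_pathsFromTo_false_false (hα : 0 < α) (hβ : 0 < β) :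
    gfOf (pathsFromTo α β false false) = gnnSer α β :=
  gfOf_eq_mk fun k hk => ncard_pathsFromTo (c := true) _ (two_le_add_mul hα hβ hk)
    fun q hq => by
      have := List.count_true_add_count_false q
      simp [InL, add_mul] at hq ⊢; omega

end EndSteps

section Bounces

variable {α β : ℕ}

def IsBounce (α β : ℕ) (p : LatticePath) (i : ℕ) : Prop :=
  ∃ c, p[i]? = some c ∧ p[i + 1]? = some (!c) ∧
    α * (p.take (i + 1)).count false = β * (p.take (i + 1)).count true

lemma bounceFree_iff {p : LatticePath} : BounceFree α β p ↔ ∀ i, ¬ IsBounce α β p i := by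
  simp only [BounceFree, IsBounce, IsLeftBounce, IsRightBounce, Bool.exists_bool,
    Bool.not_false, Bool.not_true, not_or, forall_and]
  tauto

lemma isBounce_append_iff_of_lt {p r : LatticePath} {i : ℕ} (h : i + 1 < p.length) :
    IsBounce α β (p ++ r) i ↔ IsBounce α β p i := by
  have hi : i < p.length := by omega
  simp only [IsBounce, List.getElem?_append_left h, List.getElem?_append_left hi,
    List.take_append_of_le_length h.le]

/-- The first bounce of `q ++ r` is the turn at the junction. -/
def IsBounceCut (α β : ℕ) (q r : LatticePath) : Prop :=
  BounceFree α β q ∧ α * q.count false = β * q.count true ∧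
    ∃ c, q.getLast? = some c ∧ r.head? = some (!c)

namespace IsBounceCut

variable {q r q' r' : LatticePath}

lemma length_pos (h : IsBounceCut α β q r) : 0 < q.length := by
  obtain ⟨-, -, c, hc, -⟩ := h
  exact List.length_pos_iff.mpr fun e => by simp [e] at hc

lemma isBounce (h : IsBounceCut α β q r) : IsBounce α β (q ++ r) (q.length - 1) := by
  have hpos := h.length_pos
  obtain ⟨-, hline, c, hq, hr⟩ := h
  refine ⟨c, ?_, ?_, ?_⟩
  · rwa [List.getElem?_append_left (by omega), ← List.getLast?_eq_getElem?]
  · rwa [Nat.sub_add_cancel hpos, List.getElem?_append_right le_rfl, Nat.sub_self,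
      ← List.head?_eq_getElem?]
  · rwa [Nat.sub_add_cancel hpos, List.take_left]

lemma not_isBounce (h : IsBounceCut α β q r) {i : ℕ} (hi : i + 1 < q.length) :
    ¬ IsBounce α β (q ++ r) i := by
  rw [isBounce_append_iff_of_lt hi]
  exact bounceFree_iff.mp h.1 i

lemma eq_of_append_eq (h : IsBounceCut α β q r) (h' : IsBounceCut α β q' r')
    (e : q ++ r = q' ++ r') : q = q' ∧ r = r' := by
  refine List.append_inj e (le_antisymm ?_ ?_)
  · by_contra! hlt
    exact h.not_isBounce (by have := h'.length_pos; omega) (e ▸ h'.isBounce)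
  · by_contra! hlt
    exact h'.not_isBounce (by have := h.length_pos; omega) (e ▸ h.isBounce)

end IsBounceCut

lemma exists_isBounceCut {p : LatticePath} (h : ∃ i, IsBounce α β p i) :
    ∃ q r, p = q ++ r ∧ IsBounceCut α β q r := by
  classical
  obtain ⟨c, hc, hc', hline⟩ := Nat.find_spec h
  set i := Nat.find h
  have hi : i + 1 < p.length := (List.getElem?_eq_some_iff.mp hc').1
  refine ⟨p.take (i + 1), p.drop (i + 1), (List.take_append_drop _ _).symm,
    bounceFree_iff.mpr fun j hj => ?_, hline, c, ?_, ?_⟩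
  · have hj' : j + 1 < i + 1 := by
      obtain ⟨_, _, h1, -⟩ := hj
      have := (List.getElem?_eq_some_iff.mp h1).1
      simp only [List.length_take] at this
      omega
    rw [← isBounce_append_iff_of_lt (r := p.drop (i + 1)) (by simp; omega),
      List.take_append_drop] at hj
    exact Nat.find_min h (by omega) hj
  · simp [List.getLast?_take, hc]
  · rwa [List.head?_drop]

end Bounces

section Decomposition

variable {α β : ℕ}

def bounceFreePathsFromTo (α β : ℕ) (a b : Bool) (k : ℕ) : Set LatticePath :=
  {p | InL α β k p ∧ BounceFree α β p ∧ FirstStep p a ∧ LastStep p b}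

lemma bounceFreePathsFromTo_subset (a b : Bool) (k : ℕ) :
    bounceFreePathsFromTo α β a b k ⊆ pathsFromTo α β a b k :=
  fun _ ⟨hp, _, ha, hb⟩ => ⟨hp, ha, hb⟩

lemma bounceFreePathsFromTo_finite (a b : Bool) (k : ℕ) :
    (bounceFreePathsFromTo α β a b k).Finite :=
  (pathsFromTo_finite a b k).subset (bounceFreePathsFromTo_subset a b k)

variable {a b c : Bool} {q r : LatticePath}

lemma isBounceCut_of_mem {j : ℕ} (hq : q ∈ bounceFreePathsFromTo α β a c j)
    (hr : FirstStep r (!c)) : IsBounceCut α β q r := by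
  obtain ⟨⟨hq1, hq2⟩, hbf, -, hc⟩ := hq
  exact ⟨hbf, by rw [hq1, hq2, mul_left_comm], c, hc, hr⟩

lemma append_mem_pathsFromTo {j m : ℕ} (hq : q ∈ bounceFreePathsFromTo α β a c j)
    (hr : r ∈ pathsFromTo α β (!c) b m) : q ++ r ∈ pathsFromTo α β a b (j + m) := by
  obtain ⟨⟨hq1, hq2⟩, -, ha, hc⟩ := hq
  obtain ⟨⟨hr1, hr2⟩, hr', hb⟩ := hr
  have hq0 : q ≠ [] := by rintro rfl; simp [LastStep] at hc
  have hr0 : r ≠ [] := by rintro rfl; simp [FirstStep] at hr'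
  refine ⟨⟨?_, ?_⟩, ?_, ?_⟩
  · rw [List.count_append, hq1, hr1, mul_add]
  · rw [List.count_append, hq2, hr2, mul_add]
  · rwa [FirstStep, List.head?_append_of_ne_nil _ hq0]
  · rwa [LastStep, List.getLast?_append_of_ne_nil _ hr0]

lemma exists_eq_mul_of_coprime {x y : ℕ} (hα : 0 < α) (hcop : Nat.Coprime α β)
    (h : α * y = β * x) : ∃ j, x = α * j ∧ y = β * j := by
  obtain ⟨j, rfl⟩ := hcop.dvd_of_dvd_mul_left ⟨y, h.symm⟩
  exact ⟨j, rfl, Nat.eq_of_mul_eq_mul_left hα (by rw [h, mul_left_comm])⟩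

/-- Coprimality makes the junction of a cut a lattice point `(α j, β j)` of the line. -/
lemma exists_mem_of_isBounceCut (hα : 0 < α) (hcop : Nat.Coprime α β) {n : ℕ}
    (h : IsBounceCut α β q r) (hp : q ++ r ∈ pathsFromTo α β a b n) :
    ∃ j c, j ∈ Finset.Ico 1 n ∧ q ∈ bounceFreePathsFromTo α β a c j ∧
      r ∈ pathsFromTo α β (!c) b (n - j) := by
  obtain ⟨hbf, hline, c, hc, hr⟩ := h
  obtain ⟨⟨hp1, hp2⟩, ha, hb⟩ := hp
  have hq0 : q ≠ [] := by rintro rfl; simp at hc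
  have hr0 : r ≠ [] := by rintro rfl; simp at hr
  obtain ⟨j, hj1, hj2⟩ := exists_eq_mul_of_coprime hα hcop hline
  rw [List.count_append, hj1] at hp1
  rw [List.count_append, hj2] at hp2
  obtain ⟨m, rfl⟩ : ∃ m, n = j + m :=
    Nat.exists_eq_add_of_le (Nat.le_of_mul_le_mul_left (by omega) hα)
  rw [mul_add] at hp1 hp2
  have hr1 : r.count true = α * m := by omega
  have hr2 : r.count false = β * m := by omega
  have one_le (p : LatticePath) (i : ℕ) (h1 : p.count true = α * i)
      (h2 : p.count false = β * i) (hp : p ≠ []) : 1 ≤ i := by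
    refine Nat.one_le_iff_ne_zero.mpr fun hi => hp (List.length_eq_zero_iff.mp ?_)
    simp [← List.count_true_add_count_false, h1, h2, hi]
  have := one_le r m hr1 hr2 hr0
  have := one_le q j hj1 hj2 hq0
  refine ⟨j, c, Finset.mem_Ico.mpr ⟨by omega, by omega⟩, ⟨⟨hj1, hj2⟩, hbf, ?_, hc⟩,
    ⟨⟨?_, ?_⟩, hr, ?_⟩⟩
  · rwa [FirstStep, List.head?_append_of_ne_nil _ hq0] at ha
  · rwa [Nat.add_sub_cancel_left]
  · rwa [Nat.add_sub_cancel_left]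
  · rwa [LastStep, List.getLast?_append_of_ne_nil _ hr0] at hb

end Decomposition

section Counting

variable {α β : ℕ} {a b : Bool} {n : ℕ}

/-- For `jc = (j, c)`: the paths whose first bounce is a turn from a `c`-step at `(α j, β j)`. -/
def bouncePathsAt (α β : ℕ) (a b : Bool) (n : ℕ) (jc : ℕ × Bool) : Set LatticePath :=
  Set.image2 (· ++ ·) (bounceFreePathsFromTo α β a jc.2 jc.1)
    (pathsFromTo α β (!jc.2) b (n - jc.1))

lemma pathsFromTo_eq_union (hα : 0 < α) (hcop : Nat.Coprime α β) :
    pathsFromTo α β a b n = bounceFreePathsFromTo α β a b n ∪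
      ⋃ jc ∈ (Finset.Ico 1 n ×ˢ Finset.univ : Finset (ℕ × Bool)),
        bouncePathsAt α β a b n jc := by
  ext p
  simp only [Set.mem_union, Set.mem_iUnion, Finset.mem_product,
    Finset.mem_univ, and_true, exists_prop, Prod.exists]
  constructor
  · intro hp
    by_cases hbf : BounceFree α β p
    · exact .inl ⟨hp.1, hbf, hp.2⟩
    · obtain ⟨q, r, rfl, hqr⟩ := exists_isBounceCut (by simpa [bounceFree_iff] using hbf)
      obtain ⟨j, c, hj, hq, hr⟩ := exists_mem_of_isBounceCut hα hcop hqr hp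
      exact .inr ⟨j, c, hj, q, hq, r, hr, rfl⟩
  · rintro (hp | ⟨j, c, hj, q, hq, r, hr, rfl⟩)
    · exact bounceFreePathsFromTo_subset a b n hp
    · simpa [Nat.add_sub_cancel' (Finset.mem_Ico.mp hj).2.le]
        using append_mem_pathsFromTo hq hr

open Function in
lemma pairwise_disjoint_bouncePathsAt (hα : 0 < α) :
    Pairwise (Disjoint on bouncePathsAt α β a b n) := by
  rintro ⟨j, c⟩ ⟨j', c'⟩ hne
  refine Set.disjoint_left.mpr ?_
  rintro _ ⟨q, hq, r, hr, rfl⟩ ⟨q', hq', r', hr', e⟩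
  obtain ⟨rfl, -⟩ := (isBounceCut_of_mem hq' hr'.2.1).eq_of_append_eq
    (isBounceCut_of_mem hq hr.2.1) e
  have hj : j = j' := Nat.eq_of_mul_eq_mul_left hα (hq.1.1.symm.trans hq'.1.1)
  have hc : c = c' := Option.some_injective _ (hq.2.2.2.symm.trans hq'.2.2.2)
  exact hne (by rw [hj, hc])

lemma disjoint_bounceFreePathsFromTo_bouncePathsAt (jc : ℕ × Bool) :
    Disjoint (bounceFreePathsFromTo α β a b n) (bouncePathsAt α β a b n jc) := by
  refine Set.disjoint_left.mpr ?_
  rintro _ hp ⟨q, hq, r, hr, rfl⟩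
  exact bounceFree_iff.mp hp.2.1 _ (isBounceCut_of_mem hq hr.2.1).isBounce

lemma ncard_bouncePathsAt (jc : ℕ × Bool) :
    (bouncePathsAt α β a b n jc).ncard =
      (bounceFreePathsFromTo α β a jc.2 jc.1).ncard *
        (pathsFromTo α β (!jc.2) b (n - jc.1)).ncard := by
  rw [bouncePathsAt, ← Set.image_uncurry_prod, Set.InjOn.ncard_image, Set.ncard_prod]
  rintro ⟨q, r⟩ ⟨hq, hr⟩ ⟨q', r'⟩ ⟨hq', hr'⟩ e
  obtain ⟨rfl, rfl⟩ := (isBounceCut_of_mem hq hr.2.1).eq_of_append_eq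
    (isBounceCut_of_mem hq' hr'.2.1) e
  rfl

lemma ncard_pathsFromTo_eq (hα : 0 < α) (hcop : Nat.Coprime α β) :
    (pathsFromTo α β a b n).ncard = (bounceFreePathsFromTo α β a b n).ncard +
      ∑ jc ∈ Finset.Ico 1 n ×ˢ Finset.univ,
        (bounceFreePathsFromTo α β a jc.2 jc.1).ncard *
          (pathsFromTo α β (!jc.2) b (n - jc.1)).ncard := by
  have hfin (jc : ℕ × Bool) : (bouncePathsAt α β a b n jc).Finite :=
    (bounceFreePathsFromTo_finite _ _ _).image2 _ (pathsFromTo_finite _ _ _)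
  rw [pathsFromTo_eq_union hα hcop, ← Finset.set_biUnion_coe,
    Set.ncard_union_eq (Set.disjoint_iUnion₂_right.mpr fun jc _ =>
        disjoint_bounceFreePathsFromTo_bouncePathsAt jc)
      (bounceFreePathsFromTo_finite a b n) ((Finset.finite_toSet _).biUnion fun jc _ => hfin jc),
    Set.Finite.ncard_biUnion (Finset.finite_toSet _) (fun jc _ => hfin jc)
      ((pairwise_disjoint_bouncePathsAt hα).set_pairwise _), finsum_mem_coe_finset]
  simp_rw [ncard_bouncePathsAt]

end Counting

lemma coeff_gfOf_mul_gfOf (S T : ℕ → Set LatticePath) {n : ℕ} (hn : n ≠ 0) :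
    PowerSeries.coeff n (gfOf S * gfOf T) =
      ∑ j ∈ Finset.Ico 1 n, ((S j).ncard : ℚ) * (T (n - j)).ncard := by
  rw [PowerSeries.coeff_mul, Finset.Nat.sum_antidiagonal_eq_sum_range_succ_mk,
    Finset.range_eq_Ico, Finset.sum_eq_sum_Ico_succ_bot (by omega),
    Finset.sum_Ico_succ_top (by omega)]
  simp only [gfOf, PowerSeries.coeff_mk, zero_add, ↓reduceIte, Nat.sub_self, zero_mul,
    mul_zero, add_zero]
  refine Finset.sum_congr rfl fun j hj => ?_
  rw [Finset.mem_Ico] at hj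
  rw [if_neg (by omega), if_neg (by omega)]

lemma gfOf_pathsFromTo {α β : ℕ} (hα : 0 < α) (hcop : Nat.Coprime α β) (a b : Bool) :
    gfOf (pathsFromTo α β a b) = gfOf (bounceFreePathsFromTo α β a b)
      + gfOf (bounceFreePathsFromTo α β a true) * gfOf (pathsFromTo α β false b)
      + gfOf (bounceFreePathsFromTo α β a false) * gfOf (pathsFromTo α β true b) := by
  ext n
  rcases eq_or_ne n 0 with rfl | hn
  · simp [gfOf]
  rw [map_add, map_add, coeff_gfOf_mul_gfOf _ _ hn, coeff_gfOf_mul_gfOf _ _ hn]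
  simp only [gfOf, PowerSeries.coeff_mk, if_neg hn]
  rw [ncard_pathsFromTo_eq hα hcop, Finset.sum_product]
  push_cast
  rw [add_assoc, ← Finset.sum_add_distrib]
  simp only [Fintype.sum_bool, Bool.not_true, Bool.not_false]

/-- The bounce-free generating functions satisfy
`f_ee·((1+g_en)² − g_ee·g_nn) = g_ee`, `f_nn·((1+g_en)² − g_ee·g_nn) = g_nn`, and
`(1 − f_en)·((1+g_en)² − g_ee·g_nn) = 1 + g_en`. -/
theorem statement3 (α β : ℕ) (hα : 0 < α) (hβ : 0 < β) (hcop : Nat.Coprime α β) :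
    feeSer α β * ((1 + genSer α β) ^ 2 - geeSer α β * gnnSer α β) = geeSer α β ∧
    fnnSer α β * ((1 + genSer α β) ^ 2 - geeSer α β * gnnSer α β) = gnnSer α β ∧
    (1 - fenSer α β) * ((1 + genSer α β) ^ 2 - geeSer α β * gnnSer α β)
      = 1 + genSer α β := by
  have hEE := gfOf_pathsFromTo hα hcop true true
  have hEN := gfOf_pathsFromTo hα hcop true false
  have hNE := gfOf_pathsFromTo hα hcop false true
  have hNN := gfOf_pathsFromTo hα hcop false false
  simp only [gfOf_pathsFromTo_true_true hα hβ, gfOf_pathsFromTo_true_false hα hβ,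
    gfOf_pathsFromTo_false_true hα hβ, gfOf_pathsFromTo_false_false hα hβ] at hEE hEN hNE hNN
  change geeSer α β = feeSer α β + feeSer α β * genSer α β + fenSer α β * geeSer α β at hEE
  change genSer α β = fenSer α β + feeSer α β * gnnSer α β + fenSer α β * genSer α β at hEN
  change genSer α β = _ + _ * genSer α β + fnnSer α β * geeSer α β at hNE
  change gnnSer α β = fnnSer α β + _ * gnnSer α β + fnnSer α β * genSer α β at hNN
  refine ⟨?_, ?_, ?_⟩
  · linear_combination (-(1 + genSer α β)) * hEE + geeSer α β * hEN
  · linear_combination (-(1 + genSer α β)) * hNN + gnnSer α β * hNE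
  · linear_combination (-(gnnSer α β)) * hEE + (1 + genSer α β) * hEN
end

section
/- The generating function f(x) counting bounce-free paths in L_{β/α}(k) satisfies f(x)·((1+g_en(x))² − g_ee(x)·g_nn(x)) = g(x) + 2·(g_en(x)² − g_ee(x)·g_nn(x)). -/
/-!
Cut a path at its first bounce. Since `α` and `β` are coprime, the bounce point is a lattice point
`(αj, βj)`, so the path splits into a bounce-free path of `L_{β/α}(j)` ending with some step `u`
and an arbitrary path of `L_{β/α}(k - j)` starting with the other step. Writing `G_{st}` and
`F_{st}` for the generating functions of all and of bounce-free paths that start with `s` and end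
with `t`, this gives `G_{st} = F_{st} + F_{sE} G_{Nt} + F_{sN} G_{Et}`, i.e. `G = F (1 + J G)`
with `J` the swap matrix. Here `G_{EE} = g_ee`, `G_{EN} = G_{NE} = g_en`, `G_{NN} = g_nn`, so
`det (1 + J G) = (1 + g_en)² - g_ee g_nn`, and `f = Σ F_{st}` times this determinant is the sum
of the entries of `G · adj (1 + J G)`, which is `g + 2 (g_en² - g_ee g_nn)`.
-/

namespace LatticePath

variable {α β a b i j k : ℕ} {s t u : Bool} {p q r : LatticePath}

def withCounts (a b : ℕ) : Set LatticePath := {p | p.count true = a ∧ p.count false = b}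

lemma length_eq_of_mem_withCounts (hp : p ∈ withCounts a b) : p.length = a + b := by
  rw [← List.count_true_add_count_false, hp.1, hp.2]

lemma withCounts_finite (a b : ℕ) : (withCounts a b).Finite :=
  (List.finite_length_eq Bool (a + b)).subset fun _ => length_eq_of_mem_withCounts

lemma withCounts_zero_zero : withCounts 0 0 = {[]} := by
  ext (_ | ⟨_ | _, p⟩) <;> simp [withCounts]

lemma withCounts_zero_succ (b : ℕ) :
    withCounts 0 (b + 1) = List.cons false '' withCounts 0 b := by
  ext (_ | ⟨_ | _, p⟩) <;> simp [withCounts]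

lemma withCounts_succ_zero (a : ℕ) :
    withCounts (a + 1) 0 = List.cons true '' withCounts a 0 := by
  ext (_ | ⟨_ | _, p⟩) <;> simp [withCounts]

lemma withCounts_succ_succ (a b : ℕ) : withCounts (a + 1) (b + 1) =
    List.cons true '' withCounts a (b + 1) ∪ List.cons false '' withCounts (a + 1) b := by
  ext (_ | ⟨_ | _, p⟩) <;> simp [withCounts]

theorem ncard_withCounts : ∀ a b : ℕ, (withCounts a b).ncard = (a + b).choose a
  | 0, 0 => by simp [withCounts_zero_zero]
  | 0, b + 1 => by
    rw [withCounts_zero_succ, Set.ncard_image_of_injective _ List.cons_injective,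
      ncard_withCounts 0 b]
    simp
  | a + 1, 0 => by
    rw [withCounts_succ_zero, Set.ncard_image_of_injective _ List.cons_injective,
      ncard_withCounts a 0]
    simp
  | a + 1, b + 1 => by
    have hdisj : Disjoint (List.cons true '' withCounts a (b + 1))
        (List.cons false '' withCounts (a + 1) b) :=
      Set.disjoint_left.2 fun _ ⟨_, _, h⟩ ⟨_, _, h'⟩ => by simp [← h] at h'
    rw [withCounts_succ_succ, Set.ncard_union_eq hdisj ((withCounts_finite _ _).image _)
      ((withCounts_finite _ _).image _), Set.ncard_image_of_injective _ List.cons_injective,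
      Set.ncard_image_of_injective _ List.cons_injective, ncard_withCounts a (b + 1),
      ncard_withCounts (a + 1) b,
      show a + 1 + (b + 1) = a + (b + 1) + 1 by omega, Nat.choose_succ_succ',
      show a + (b + 1) = a + 1 + b by omega]

lemma setOf_withCounts_ends_eq_image (s t : Bool) (hab : 2 ≤ a + b) :
    {p | p ∈ withCounts a b ∧ FirstStep p s ∧ LastStep p t}
      = (fun q => s :: (q ++ [t])) '' {q | s :: (q ++ [t]) ∈ withCounts a b} := by
  ext p
  constructor
  · rintro ⟨hp, hs, ht⟩
    obtain _ | ⟨x, r⟩ := p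
    · simp [FirstStep] at hs
    obtain rfl : x = s := by simpa [FirstStep] using hs
    obtain rfl | ⟨q, y, rfl⟩ := r.eq_nil_or_concat'
    · have := length_eq_of_mem_withCounts hp
      simp at this
      omega
    obtain rfl : y = t := by
      rw [LastStep, ← List.cons_append, List.getLast?_concat] at ht
      simpa using ht
    exact ⟨q, hp, rfl⟩
  · rintro ⟨q, hq, rfl⟩
    exact ⟨hq, rfl, by simp only [LastStep, ← List.cons_append, List.getLast?_concat]⟩

lemma cons_append_singleton_injective (s t : Bool) :
    Function.Injective fun q : LatticePath => s :: (q ++ [t]) :=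
  fun _ _ h => List.append_cancel_right (List.cons_injective h)

lemma ncard_withCounts_ends (s t : Bool) (hab : 2 ≤ a + b) :
    {p | p ∈ withCounts a b ∧ FirstStep p s ∧ LastStep p t}.ncard
      = {q | s :: (q ++ [t]) ∈ withCounts a b}.ncard := by
  rw [setOf_withCounts_ends_eq_image s t hab,
    Set.ncard_image_of_injective _ (cons_append_singleton_injective s t)]

lemma ncard_withCounts_ends_true_true (ha : 1 ≤ a) (hb : 1 ≤ b) :
    {p | p ∈ withCounts a b ∧ FirstStep p true ∧ LastStep p true}.ncard
      = (a + b - 2).choose b := by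
  rw [ncard_withCounts_ends _ _ (by omega)]
  rcases Nat.lt_or_ge a 2 with ha2 | ha2
  · have : {q | true :: (q ++ [true]) ∈ withCounts a b} = ∅ := by
      ext q; simp [withCounts]; omega
    rw [this, Set.ncard_empty, Nat.choose_eq_zero_of_lt (by omega)]
  · have : {q | true :: (q ++ [true]) ∈ withCounts a b} = withCounts (a - 2) b := by
      ext q; simp [withCounts]; omega
    rw [this, ncard_withCounts, Nat.choose_symm_add, show a - 2 + b = a + b - 2 by omega]

lemma ncard_withCounts_ends_false_false (ha : 1 ≤ a) (hb : 1 ≤ b) :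
    {p | p ∈ withCounts a b ∧ FirstStep p false ∧ LastStep p false}.ncard
      = (a + b - 2).choose a := by
  rw [ncard_withCounts_ends _ _ (by omega)]
  rcases Nat.lt_or_ge b 2 with hb2 | hb2
  · have : {q | false :: (q ++ [false]) ∈ withCounts a b} = ∅ := by
      ext q; simp [withCounts]; omega
    rw [this, Set.ncard_empty, Nat.choose_eq_zero_of_lt (by omega)]
  · have : {q | false :: (q ++ [false]) ∈ withCounts a b} = withCounts a (b - 2) := by
      ext q; simp [withCounts]; omega
    rw [this, ncard_withCounts, show a + (b - 2) = a + b - 2 by omega]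

lemma ncard_withCounts_ends_of_ne (hst : s ≠ t) (ha : 1 ≤ a) (hb : 1 ≤ b) :
    {p | p ∈ withCounts a b ∧ FirstStep p s ∧ LastStep p t}.ncard
      = (a + b - 2).choose (a - 1) := by
  have : {q | s :: (q ++ [t]) ∈ withCounts a b} = withCounts (a - 1) (b - 1) := by
    ext q; cases s <;> cases t <;> simp_all [withCounts] <;> omega
  rw [ncard_withCounts_ends _ _ (by omega), this, ncard_withCounts,
    show a - 1 + (b - 1) = a + b - 2 by omega]

def IsBounce (α β : ℕ) (p : LatticePath) (i : ℕ) : Prop :=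
  ∃ u, p[i]? = some u ∧ p[i + 1]? = some (!u) ∧
    α * (p.take (i + 1)).count false = β * (p.take (i + 1)).count true

lemma bounceFree_iff : BounceFree α β p ↔ ∀ i, ¬ IsBounce α β p i := by
  simp only [BounceFree, IsBounce, IsLeftBounce, IsRightBounce, not_exists, Bool.forall_bool,
    Bool.not_false, Bool.not_true, ← forall_and]
  exact forall_congr' fun _ => and_comm

lemma IsBounce.add_two_le_length (h : IsBounce α β p i) : i + 2 ≤ p.length := by
  obtain ⟨_, -, h, -⟩ := h
  have := (List.getElem?_eq_some_iff.1 h).1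
  omega

lemma isBounce_append_iff (hi : i + 2 ≤ q.length) :
    IsBounce α β (q ++ r) i ↔ IsBounce α β q i := by
  simp only [IsBounce, List.getElem?_append_left (by omega : i < q.length),
    List.getElem?_append_left (by omega : i + 1 < q.length),
    List.take_append_of_le_length (by omega : i + 1 ≤ q.length)]

lemma ne_nil_of_lastStep (h : LastStep p u) : p ≠ [] := by
  rintro rfl
  simp [LastStep] at h

lemma isBounce_append_length_sub_one (hline : α * q.count false = β * q.count true)
    (hq : LastStep q u) (hr : FirstStep r (!u)) :
    IsBounce α β (q ++ r) (q.length - 1) := by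
  have hpos : 0 < q.length := List.length_pos_iff.2 (ne_nil_of_lastStep hq)
  refine ⟨u, ?_, ?_, ?_⟩
  · rw [List.getElem?_append_left (by omega), ← List.getLast?_eq_getElem?]
    exact hq
  · rw [Nat.sub_add_cancel hpos, List.getElem?_append_right le_rfl, Nat.sub_self,
      ← List.head?_eq_getElem?]
    exact hr
  · rwa [Nat.sub_add_cancel hpos, List.take_left' rfl]

def pathsWithEnds (α β : ℕ) (s t : Bool) (k : ℕ) : Set LatticePath :=
  {p | InL α β k p ∧ FirstStep p s ∧ LastStep p t}

def bounceFreeWithEnds (α β : ℕ) (s t : Bool) (k : ℕ) : Set LatticePath :=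
  pathsWithEnds α β s t k ∩ {p | BounceFree α β p}

lemma pathsWithEnds_finite : (pathsWithEnds α β s t k).Finite :=
  (withCounts_finite _ _).subset fun _ hp => hp.1

lemma length_eq_of_mem_pathsWithEnds (hp : p ∈ pathsWithEnds α β s t k) :
    p.length = (α + β) * k := by
  rw [length_eq_of_mem_withCounts hp.1, add_mul]

lemma append_mem_pathsWithEnds {u' : Bool} (hq : q ∈ pathsWithEnds α β s u j)
    (hr : r ∈ pathsWithEnds α β u' t k) : q ++ r ∈ pathsWithEnds α β s t (j + k) := by
  obtain ⟨⟨hqE, hqN⟩, hqs, -⟩ := hq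
  obtain ⟨⟨hrE, hrN⟩, -, hrt⟩ := hr
  refine ⟨⟨?_, ?_⟩, ?_, ?_⟩
  · rw [List.count_append, hqE, hrE, mul_add]
  · rw [List.count_append, hqN, hrN, mul_add]
  · rw [FirstStep, List.head?_append, hqs, Option.some_or]
  · rw [LastStep, List.getLast?_append, hrt, Option.some_or]

/-- Paths whose first bounce is at the lattice point `(αj, βj)`, arriving there with step `u`. -/
def cut (α β : ℕ) (s t : Bool) (k j : ℕ) (u : Bool) : Set LatticePath :=
  Set.image2 (· ++ ·) (bounceFreeWithEnds α β s u j) (pathsWithEnds α β (!u) t (k - j))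

lemma isBounce_of_mem_cut (hpq : p = q ++ r) (hq : q ∈ bounceFreeWithEnds α β s u j)
    (hr : r ∈ pathsWithEnds α β (!u) t k) : IsBounce α β p (q.length - 1) := by
  obtain ⟨⟨⟨hqE, hqN⟩, -, hqu⟩, -⟩ := hq
  rw [hpq]
  exact isBounce_append_length_sub_one (by rw [hqE, hqN]; ring) hqu hr.2.1

lemma cut_subset (hjk : j ≤ k) :
    cut α β s t k j u ⊆ pathsWithEnds α β s t k \ {p | BounceFree α β p} := by
  rintro _ ⟨q, hq, r, hr, rfl⟩
  refine ⟨?_, fun hbf => bounceFree_iff.1 hbf _ (isBounce_of_mem_cut rfl hq hr)⟩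
  simpa [Nat.add_sub_cancel' hjk] using append_mem_pathsWithEnds hq.1 hr

lemma ncard_cut :
    (cut α β s t k j u).ncard
      = (bounceFreeWithEnds α β s u j).ncard * (pathsWithEnds α β (!u) t (k - j)).ncard := by
  rw [cut, ← Set.image_uncurry_prod, Set.InjOn.ncard_image, Set.ncard_prod]
  rintro ⟨q, r⟩ ⟨hq, -⟩ ⟨q', r'⟩ ⟨hq', -⟩ h
  have := List.append_inj h (by rw [length_eq_of_mem_pathsWithEnds hq.1,
    length_eq_of_mem_pathsWithEnds hq'.1])
  exact Prod.ext this.1 this.2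

/-- A path in a later cut would have the bounce of an earlier cut inside its bounce-free part. -/
lemma not_mem_cut_of_mem_cut_of_lt (hαβ : 0 < α + β) {j' : ℕ} {u' : Bool} (hjj' : j < j')
    (hp : p ∈ cut α β s t k j u) : p ∉ cut α β s t k j' u' := by
  obtain ⟨q, hq, r, hr, rfl⟩ := hp
  rintro ⟨q', hq', r', -, hp'⟩
  have hlen : q.length + 1 ≤ q'.length := by
    rw [length_eq_of_mem_pathsWithEnds hq.1, length_eq_of_mem_pathsWithEnds hq'.1]
    nlinarith
  have hpos : 0 < q.length := List.length_pos_iff.2 (ne_nil_of_lastStep hq.1.2.2)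
  refine bounceFree_iff.1 hq'.2 (q.length - 1) ?_
  rw [← isBounce_append_iff (r := r') (by omega), show q' ++ r' = q ++ r from hp']
  exact isBounce_of_mem_cut rfl hq hr

lemma cut_disjoint (hαβ : 0 < α + β) {j' : ℕ} {u' : Bool} (h : (j, u) ≠ (j', u')) :
    Disjoint (cut α β s t k j u) (cut α β s t k j' u') := by
  rw [Set.disjoint_left]
  intro p hp hp'
  rcases lt_trichotomy j j' with hjj' | rfl | hjj'
  · exact not_mem_cut_of_mem_cut_of_lt hαβ hjj' hp hp'
  · obtain ⟨q, hq, r, -, rfl⟩ := hp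
    obtain ⟨q', hq', r', -, hqr⟩ := hp'
    have hqq' := (List.append_inj hqr (by rw [length_eq_of_mem_pathsWithEnds hq.1,
      length_eq_of_mem_pathsWithEnds hq'.1])).1
    have hu : some u' = some u := by rw [← hq.1.2.2, ← hq'.1.2.2, hqq']
    exact h (by rw [Option.some_inj.1 hu])
  · exact not_mem_cut_of_mem_cut_of_lt hαβ hjj' hp' hp

lemma exists_eq_mul_of_mul_eq_mul (hα : 0 < α) (hcop : Nat.Coprime α β) {x y : ℕ}
    (h : α * y = β * x) : ∃ j, x = α * j ∧ y = β * j := by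
  obtain ⟨j, rfl⟩ : α ∣ x := hcop.dvd_of_dvd_mul_left ⟨y, h.symm⟩
  refine ⟨j, rfl, Nat.eq_of_mul_eq_mul_left hα ?_⟩
  rw [h]
  ring

lemma drop_mem_withCounts {a' b' m : ℕ} (hp : p ∈ withCounts a b)
    (hq : p.take m ∈ withCounts a' b') : p.drop m ∈ withCounts (a - a') (b - b') := by
  have hE := congrArg (List.count true) (List.take_append_drop m p)
  have hN := congrArg (List.count false) (List.take_append_drop m p)
  rw [List.count_append] at hE hN
  exact ⟨by rw [← hp.1, ← hq.1]; omega, by rw [← hp.2, ← hq.2]; omega⟩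

lemma exists_mem_cut (hα : 0 < α) (hcop : Nat.Coprime α β)
    (hp : p ∈ pathsWithEnds α β s t k \ {p | BounceFree α β p}) :
    ∃ j ∈ Finset.Ico 1 k, ∃ u, p ∈ cut α β s t k j u := by
  classical
  obtain ⟨hpL, hbf⟩ := hp
  have hex : ∃ i, IsBounce α β p i := by simpa [bounceFree_iff] using hbf
  obtain ⟨i, hb, hmin⟩ : ∃ i, IsBounce α β p i ∧ ∀ i' < i, ¬ IsBounce α β p i' :=
    ⟨Nat.find hex, Nat.find_spec hex, fun _ => Nat.find_min hex⟩
  have hi := hb.add_two_le_length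
  obtain ⟨u, hu, hu', hline⟩ := hb
  obtain ⟨j, hjE, hjN⟩ := exists_eq_mul_of_mul_eq_mul hα hcop hline
  have hlen : (α + β) * j = i + 1 := by
    rw [add_mul, ← length_eq_of_mem_withCounts (p := p.take (i + 1)) ⟨hjE, hjN⟩,
      List.length_take_of_le (by omega)]
  have hj : j ∈ Finset.Ico 1 k := by
    refine Finset.mem_Ico.2 ⟨Nat.pos_of_ne_zero ?_, Nat.lt_of_mul_lt_mul_left (a := α + β) ?_⟩
    · rintro rfl
      simp at hlen
    · rw [hlen, ← length_eq_of_mem_pathsWithEnds hpL]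
      omega
  have hq : p.take (i + 1) ∈ bounceFreeWithEnds α β s u j := by
    refine ⟨⟨⟨hjE, hjN⟩, ?_, ?_⟩, bounceFree_iff.2 fun i' hb' => ?_⟩
    · rw [FirstStep, List.head?_take, if_neg (by omega)]
      exact hpL.2.1
    · rw [LastStep, List.getLast?_take, if_neg (by omega), Nat.add_sub_cancel, hu, Option.some_or]
    · have hi' := hb'.add_two_le_length
      rw [List.length_take_of_le (by omega)] at hi'
      rw [← isBounce_append_iff (r := p.drop (i + 1)) (by simp; omega),
        List.take_append_drop] at hb'
      exact hmin i' (by omega) hb'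
  have hr : p.drop (i + 1) ∈ pathsWithEnds α β (!u) t (k - j) := by
    refine ⟨?_, ?_, ?_⟩
    · rw [InL, Nat.mul_sub, Nat.mul_sub]
      exact drop_mem_withCounts hpL.1 ⟨hjE, hjN⟩
    · rw [FirstStep, List.head?_drop]
      exact hu'
    · rw [LastStep, List.getLast?_drop, if_neg (by omega)]
      exact hpL.2.2
  exact ⟨j, hj, u, _, hq, _, hr, List.take_append_drop _ _⟩

theorem ncard_pathsWithEnds (hα : 0 < α) (hcop : Nat.Coprime α β) (s t : Bool) (k : ℕ) :
    (pathsWithEnds α β s t k).ncard = (bounceFreeWithEnds α β s t k).ncard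
      + ∑ j ∈ Finset.Ico 1 k, ∑ u, (bounceFreeWithEnds α β s u j).ncard
          * (pathsWithEnds α β (!u) t (k - j)).ncard := by
  have hαβ : 0 < α + β := by omega
  set J : Finset (ℕ × Bool) := Finset.Ico 1 k ×ˢ Finset.univ
  have hJ {ju : ℕ × Bool} (h : ju ∈ (J : Set (ℕ × Bool))) : ju.1 ≤ k :=
    (Finset.mem_Ico.1 (Finset.mem_product.1 h).1).2.le
  have hbouncing : pathsWithEnds α β s t k \ {p | BounceFree α β p}
      = ⋃ ju ∈ (J : Set (ℕ × Bool)), cut α β s t k ju.1 ju.2 := by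
    ext p
    simp only [Set.mem_iUnion, exists_prop]
    constructor
    · intro hp
      obtain ⟨j, hj, u, hu⟩ := exists_mem_cut hα hcop hp
      exact ⟨(j, u), Finset.mem_product.2 ⟨hj, Finset.mem_univ u⟩, hu⟩
    · rintro ⟨ju, hju, hp⟩
      exact cut_subset (hJ hju) hp
  rw [← Set.ncard_inter_add_ncard_sdiff_eq_ncard _ {p | BounceFree α β p} pathsWithEnds_finite,
    hbouncing, Set.Finite.ncard_biUnion J.finite_toSet
      (fun _ h => pathsWithEnds_finite.subset ((cut_subset (hJ h)).trans Set.sdiff_subset))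
      (fun _ _ _ _ h => cut_disjoint hαβ h),
    finsum_mem_coe_finset, Finset.sum_product]
  simp only [ncard_cut]
  rfl

lemma coeff_gfOf (S : ℕ → Set LatticePath) (k : ℕ) :
    PowerSeries.coeff k (gfOf S) = if k = 0 then 0 else ((S k).ncard : ℚ) :=
  PowerSeries.coeff_mk _ _

lemma coeff_gfOf_mul (S T : ℕ → Set LatticePath) (k : ℕ) :
    PowerSeries.coeff k (gfOf S * gfOf T)
      = ∑ j ∈ Finset.Ico 1 k, ((S j).ncard : ℚ) * (T (k - j)).ncard := by
  rw [PowerSeries.coeff_mul, Finset.Nat.sum_antidiagonal_eq_sum_range_succ_mk,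
    ← Finset.sum_subset (fun j hj => by simp at hj ⊢; omega :
      Finset.Ico 1 k ⊆ Finset.range (k + 1))]
  · refine Finset.sum_congr rfl fun j hj => ?_
    rw [Finset.mem_Ico] at hj
    rw [coeff_gfOf, coeff_gfOf, if_neg (by omega), if_neg (by omega)]
  · intro j hj hj'
    simp only [Finset.mem_range, Finset.mem_Ico, not_and_or] at hj hj'
    rw [coeff_gfOf, coeff_gfOf]
    rcases hj' with hj' | hj'
    · rw [if_pos (by omega), zero_mul]
    · rw [if_pos (show k - j = 0 by omega), mul_zero]

lemma gfOf_eq_mk {S : ℕ → Set LatticePath} {c : ℕ → ℕ} (h : ∀ k ≠ 0, (S k).ncard = c k) :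
    gfOf S = PowerSeries.mk fun k => if k = 0 then 0 else (c k : ℚ) := by
  ext k
  rw [coeff_gfOf, PowerSeries.coeff_mk]
  split_ifs with hk
  · rfl
  · rw [h k hk]

lemma ncard_eq_sum_ends {S : Set LatticePath} (hS : S.Finite) (hne : [] ∉ S) :
    S.ncard = ∑ s, ∑ t, {p ∈ S | FirstStep p s ∧ LastStep p t}.ncard := by
  have hS' : S = ⋃ st : Bool × Bool, {p ∈ S | FirstStep p st.1 ∧ LastStep p st.2} := by
    ext p
    simp only [Set.mem_iUnion, Set.mem_sep_iff, Prod.exists, exists_and_left, iff_self_and]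
    intro hp
    have hp' : p ≠ [] := fun h => hne (h ▸ hp)
    exact ⟨_, List.head?_eq_some_head hp', _, List.getLast?_eq_some_getLast hp'⟩
  have hdisj : Pairwise (Function.onFun Disjoint fun st : Bool × Bool =>
      {p ∈ S | FirstStep p st.1 ∧ LastStep p st.2}) := by
    rintro ⟨s, t⟩ ⟨s', t'⟩ hne'
    refine Set.disjoint_left.2 fun p ⟨_, hs, ht⟩ ⟨_, hs', ht'⟩ => hne' ?_
    rw [FirstStep, hs] at hs'
    rw [LastStep, ht] at ht'
    exact Prod.ext (Option.some_inj.1 hs') (Option.some_inj.1 ht')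
  conv_lhs => rw [hS']
  rw [Set.ncard_iUnion_of_finite (fun _ => hS.subset (Set.sep_subset _ _)) hdisj,
    finsum_eq_sum_of_fintype, Fintype.sum_prod_type]

lemma gfOf_eq_sum_ends {S : ℕ → Set LatticePath} (hS : ∀ k, (S k).Finite)
    (hne : ∀ k ≠ 0, [] ∉ S k) :
    gfOf S = ∑ s, ∑ t, gfOf fun k => {p ∈ S k | FirstStep p s ∧ LastStep p t} := by
  ext k
  simp only [map_sum, coeff_gfOf]
  split_ifs with hk
  · simp
  · rw [ncard_eq_sum_ends (hS k) (hne k hk)]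
    push_cast
    rfl

lemma not_inL_nil (hα : 0 < α) (hk : k ≠ 0) : ¬ InL α β k [] := fun h =>
  (Nat.mul_pos hα (Nat.pos_of_ne_zero hk)).ne' (by simpa using h.1.symm)

lemma gSer_eq_sum (hα : 0 < α) : gSer α β = ∑ s, ∑ t, gfOf (pathsWithEnds α β s t) := by
  have : gSer α β = gfOf fun k => withCounts (α * k) (β * k) :=
    (gfOf_eq_mk fun k _ => by rw [ncard_withCounts, add_mul]).symm
  rw [this, gfOf_eq_sum_ends (fun _ => withCounts_finite _ _)
    (fun _ hk => not_inL_nil hα hk)]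
  rfl

lemma fSer_eq_sum (hα : 0 < α) : fSer α β = ∑ s, ∑ t, gfOf (bounceFreeWithEnds α β s t) := by
  rw [fSer, gfOf_eq_sum_ends (fun _ => (withCounts_finite _ _).subset fun _ hp => hp.1)
    (fun _ hk h => not_inL_nil hα hk h.1)]
  exact Finset.sum_congr rfl fun s _ => Finset.sum_congr rfl fun t _ =>
    congrArg gfOf (funext fun k => Set.ext fun p => and_right_comm)

lemma gfOf_pathsWithEnds_true_true (hα : 0 < α) (hβ : 0 < β) :
    gfOf (pathsWithEnds α β true true) = geeSer α β :=
  gfOf_eq_mk fun k hk => by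
    rw [add_mul]
    exact ncard_withCounts_ends_true_true (Nat.mul_pos hα (by omega)) (Nat.mul_pos hβ (by omega))

lemma gfOf_pathsWithEnds_false_false (hα : 0 < α) (hβ : 0 < β) :
    gfOf (pathsWithEnds α β false false) = gnnSer α β :=
  gfOf_eq_mk fun k hk => by
    rw [add_mul]
    exact ncard_withCounts_ends_false_false (Nat.mul_pos hα (by omega)) (Nat.mul_pos hβ (by omega))

lemma gfOf_pathsWithEnds_of_ne (hα : 0 < α) (hβ : 0 < β) (hst : s ≠ t) :
    gfOf (pathsWithEnds α β s t) = genSer α β :=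
  gfOf_eq_mk fun k hk => by
    rw [add_mul]
    exact ncard_withCounts_ends_of_ne hst (Nat.mul_pos hα (by omega)) (Nat.mul_pos hβ (by omega))

theorem gfOf_pathsWithEnds (hα : 0 < α) (hcop : Nat.Coprime α β) (s t : Bool) :
    gfOf (pathsWithEnds α β s t) = gfOf (bounceFreeWithEnds α β s t)
      + ∑ u, gfOf (bounceFreeWithEnds α β s u) * gfOf (pathsWithEnds α β (!u) t) := by
  ext k
  simp only [map_add, map_sum, coeff_gfOf_mul, coeff_gfOf]
  split_ifs with hk
  · simp [hk]
  · rw [ncard_pathsWithEnds hα hcop, Finset.sum_comm]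
    push_cast
    rfl

end LatticePath

open LatticePath

/-- The generating function `f(x)` of bounce-free paths in
`L_{β/α}(k)` satisfies `f·((1+g_en)² − g_ee·g_nn) = g + 2·(g_en² − g_ee·g_nn)`. -/
theorem statement4 (α β : ℕ) (hα : 0 < α) (hβ : 0 < β) (hcop : Nat.Coprime α β) :
    fSer α β * ((1 + genSer α β) ^ 2 - geeSer α β * gnnSer α β)
      = gSer α β + 2 * (genSer α β ^ 2 - geeSer α β * gnnSer α β) := by
  have hee := gfOf_pathsWithEnds hα hcop true true
  have hen := gfOf_pathsWithEnds hα hcop true false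
  have hne := gfOf_pathsWithEnds hα hcop false true
  have hnn := gfOf_pathsWithEnds hα hcop false false
  have htf := gfOf_pathsWithEnds_of_ne (s := true) (t := false) hα hβ (by decide)
  have hft := gfOf_pathsWithEnds_of_ne (s := false) (t := true) hα hβ (by decide)
  rw [fSer_eq_sum hα, gSer_eq_sum hα]
  simp only [Fintype.sum_bool, Bool.not_true, Bool.not_false, gfOf_pathsWithEnds_true_true hα hβ,
    gfOf_pathsWithEnds_false_false hα hβ, htf, hft] at hee hen hne hnn ⊢
  linear_combination (gnnSer α β - 1 - genSer α β) * hee + (geeSer α β - 1 - genSer α β) * hen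
    + (gnnSer α β - 1 - genSer α β) * hne + (geeSer α β - 1 - genSer α β) * hnn
end
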